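/- arXiv:1305.1818 — 7 statements merged into one kernel-verified Lean document; each statement's English description precedes it below -/
import Mathlib

section
/- If A is an m×n matrix of rank r, and I is a set of r row indices and J a set of r column indices such that the r×r submatrix A(I,J) is nonsingular, then A is exactly recovered by the skeleton formula: for all i,j, A(i,j) equals the (i,j) entry of A(:,J) · A(I,J)^{-1} · A(I,:). -/
/-- Skeleton (cross) decomposition exactly recovers a rank-`r` matrix from `r` rows
and `r` columns whose intersection submatrix is nonsingular. -/
theorem skeleton_exact_recovery {m n r : ℕ} (A : Matrix (Fin m) (Fin n) ℝ)
    (I : Fin r → Fin m) (J : Fin r → Fin n)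
    (hrank : A.rank = r)
    (hinv : IsUnit (A.submatrix I J).det) :
    ∀ i j, A i j =
      (A.submatrix id J * (A.submatrix I J)⁻¹ * A.submatrix I id) i j := by
  set B := A.submatrix id J with hB
  set M := A.submatrix I J with hM
  -- M is obtained from B by selecting rows, via a selection matrix P
  have hPM : M = (Matrix.of fun k i => if i = I k then (1:ℝ) else 0) * B := by
    ext k l
    simp [Matrix.mul_apply, hM, hB]
  -- rank of M is r
  have hMrank : M.rank = r := by
    rw [Matrix.rank_of_isUnit M ((Matrix.isUnit_iff_isUnit_det M).mpr hinv)]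
    simp
  -- rank of B is r
  have hBrank : B.rank = r := by
    refine le_antisymm (by simpa using B.rank_le_card_width) ?_
    calc r = M.rank := hMrank.symm
    _ ≤ B.rank := by rw [hPM]; exact Matrix.rank_mul_le_right _ _
  -- column space of B is contained in that of A
  have hsub : LinearMap.range B.mulVecLin ≤ LinearMap.range A.mulVecLin := by
    rintro x ⟨v, rfl⟩
    refine ⟨fun j => ∑ k, if J k = j then v k else 0, ?_⟩
    ext i
    simp only [Matrix.mulVecLin_apply, Matrix.mulVec, dotProduct, hB,
      Matrix.submatrix_apply, id_eq, Finset.mul_sum]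
    rw [Finset.sum_comm]
    refine Finset.sum_congr rfl fun k _ => ?_
    simp [mul_ite]
  -- hence they are equal since both have dimension r
  have heq : LinearMap.range B.mulVecLin = LinearMap.range A.mulVecLin :=
    Submodule.eq_of_le_of_finrank_le hsub
      (by rw [← Matrix.rank, ← Matrix.rank, hBrank, hrank])
  -- every column of A is in the column space of B
  have hcol : ∀ j : Fin n, ∃ v : Fin r → ℝ, B.mulVec v = fun i => A i j := by
    intro j
    have hx : (fun i => A i j) ∈ LinearMap.range A.mulVecLin := by
      refine ⟨Pi.single j 1, ?_⟩
      ext i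
      simp [Matrix.mulVecLin_apply]
    rw [← heq] at hx
    exact hx
  choose C hC using hcol
  set C' : Matrix (Fin r) (Fin n) ℝ := Matrix.of fun k j => C j k with hC'
  have hBC : B * C' = A := by
    ext i j
    have := congrFun (hC j) i
    simpa [Matrix.mul_apply, Matrix.mulVec, dotProduct, hC'] using this
  have hIC : M * C' = A.submatrix I id := by
    ext k j
    have := congrFun (hC j) (I k)
    simpa [Matrix.mul_apply, Matrix.mulVec, dotProduct, hC', hM, hB] using this
  have key : B * M⁻¹ * A.submatrix I id = A := by
    rw [← hIC, Matrix.mul_assoc, ← Matrix.mul_assoc M⁻¹, Matrix.nonsing_inv_mul M hinv,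
      Matrix.one_mul, hBC]
  intro i j
  rw [key]
end

section
/- If A(I,J) is an r×r submatrix of maximal volume (maximal |det|) among all r×r submatrices of an m×n matrix A, then every entry of the matrix A(I,J)^{-1} A(I,:) is bounded by 1 in absolute value; that is, for all t, j: |Σ_s [A(I,J)^{-1}]_{t,s} A(I_s, j)| ≤ 1. -/
/-- A maximum-volume `r×r` submatrix dominates in its rows:
every entry of `A(I,J)⁻¹ · A(I,:)` is bounded by `1` in absolute value. -/
theorem maxvol_dominates_rows {m n r : ℕ} (A : Matrix (Fin m) (Fin n) ℝ)
    (I : Fin r → Fin m) (J : Fin r → Fin n)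
    (hmax : ∀ (I' : Fin r → Fin m) (J' : Fin r → Fin n),
      |(A.submatrix I' J').det| ≤ |(A.submatrix I J).det|)
    (hinv : IsUnit (A.submatrix I J).det) :
    ∀ (t : Fin r) (j : Fin n),
      |∑ s : Fin r, (A.submatrix I J)⁻¹ t s * A (I s) j| ≤ 1 := by
  intro t j
  set B := A.submatrix I J with hB
  have hd : B.det ≠ 0 := by
    simpa [isUnit_iff_ne_zero] using hinv
  have hupd : B.updateCol t (fun s => A (I s) j)
      = A.submatrix I (Function.update J t j) := by
    ext s u
    by_cases hu : u = t <;>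
      simp [Matrix.updateCol_apply, Function.update, hu, hB]
  have key : ∑ s : Fin r, B⁻¹ t s * A (I s) j
      = B.det⁻¹ * (A.submatrix I (Function.update J t j)).det := by
    have := congrFun (Matrix.cramer_eq_adjugate_mulVec B (fun s => A (I s) j)) t
    rw [Matrix.cramer_apply, hupd] at this
    rw [Matrix.inv_def]
    simp only [Matrix.smul_apply, Ring.inverse_eq_inv', smul_eq_mul]
    rw [this]
    simp [Matrix.mulVec, dotProduct, Finset.mul_sum, mul_assoc]
  rw [key, abs_mul]
  have h1 : |B.det⁻¹| = |B.det|⁻¹ := abs_inv _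
  have h2 : |(A.submatrix I (Function.update J t j)).det| ≤ |B.det| :=
    hmax I (Function.update J t j)
  rw [h1]
  rw [inv_mul_le_iff₀ (by positivity), mul_one]
  exact h2
end

section
/- If A(I,J) is an r×r submatrix of maximal volume among all r×r submatrices of an m×n matrix A, then for all i and s it holds |Σ_t A(i, J_t)[A(I,J)^{-1}]_{t,s}| ≤ 1; i.e., the maximum-volume submatrix dominates in the columns it occupies. -/
/-- A maximum-volume `r×r` submatrix dominates in its columns:
every entry of `A(:,J) · A(I,J)⁻¹` is bounded by `1` in absolute value. -/
theorem maxvol_dominates_columns {m n r : ℕ} (A : Matrix (Fin m) (Fin n) ℝ)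
    (I : Fin r → Fin m) (J : Fin r → Fin n)
    (hmax : ∀ (I' : Fin r → Fin m) (J' : Fin r → Fin n),
      |(A.submatrix I' J').det| ≤ |(A.submatrix I J).det|)
    (hinv : IsUnit (A.submatrix I J).det) :
    ∀ (i : Fin m) (s : Fin r),
      |∑ t : Fin r, A i (J t) * (A.submatrix I J)⁻¹ t s| ≤ 1 := by
  intro i s
  set B := A.submatrix I J with hB
  set x : Fin r → ℝ := fun t => A i (J t) with hx
  have hdetpos : 0 < |B.det| := by
    rcases hinv with ⟨u, hu⟩
    simp only [abs_pos]
    intro h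
    rw [← hu] at h
    exact u.ne_zero h
  have hsum : (∑ t : Fin r, A i (J t) * B⁻¹ t s) = (Matrix.vecMul x B⁻¹) s := by
    simp [Matrix.vecMul, dotProduct, hx]
  have hcram : B.det • (Matrix.vecMul x B⁻¹) = Matrix.cramer B.transpose x :=
    Matrix.det_smul_inv_vecMul_eq_cramer_transpose B x hinv
  have hrow : B.updateRow s x = A.submatrix (Function.update I s i) J := by
    ext u t
    by_cases h : u = s
    · subst h; simp [hx, hB]
    · simp [Matrix.updateRow_ne h, Function.update_of_ne h, hB]
  have key : B.det * (Matrix.vecMul x B⁻¹) s = (A.submatrix (Function.update I s i) J).det := by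
    have := congrFun hcram s
    simp only [Pi.smul_apply, smul_eq_mul] at this
    rw [this, Matrix.cramer_transpose_apply, hrow]
  have hle : |B.det * (Matrix.vecMul x B⁻¹) s| ≤ |B.det| := by
    rw [key]; exact hmax _ _
  rw [abs_mul] at hle
  rw [hsum]
  by_contra h
  push_neg at h
  have : |B.det| * 1 < |B.det| * |(Matrix.vecMul x B⁻¹) s| := by
    exact mul_lt_mul_of_pos_left h hdetpos
  rw [mul_one] at this
  linarith
end

section
/- For d = 2 (the matrix case), if A is an m×n matrix with ‖A − X‖_C ≤ E_C for some rank-r matrix X, and (I,J) is the maximum-volume choice of r rows and columns, then the skeleton interpolation Ã = A(:,J)A(I,J)^{-1}A(I,:) satisfies ‖A − Ã‖_C ≤ (r+1)² E_C. -/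
/-- The Chebyshev (max-entry) norm of a real matrix. -/
noncomputable def chebNorm {m n : ℕ} (M : Matrix (Fin m) (Fin n) ℝ) : ℝ :=
  ⨆ i, ⨆ j, |M i j|

/-!
Bordering the maximum-volume block `A(I,J)` by a row `i` and a column `j` gives an
`(r+1) × (r+1)` submatrix `B` whose determinant is `det A(I,J) · (A - Ã) i j` (Schur complement).
On the other hand `B` lies within `E_C` entrywise of the corresponding submatrix `S` of `X`, which
is singular as `rank X ≤ r`. For a kernel vector `v` of `S`, `det B · v = adj B · (B - S) · v`,
and every entry of `adj B` is an `r × r` minor of `A`, hence at most `|det A(I,J)|` in absolute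
value. Comparing at the largest coordinate of `v` gives `|det B| ≤ (r+1)² E_C |det A(I,J)|`.
-/

open Matrix

section ChebNorm

variable {m n : ℕ}

lemma abs_apply_le_chebNorm (M : Matrix (Fin m) (Fin n) ℝ) (i : Fin m) (j : Fin n) :
    |M i j| ≤ chebNorm M :=
  (le_ciSup (f := fun j => |M i j|) (Set.finite_range _).bddAbove j).trans
    (le_ciSup (f := fun i => ⨆ j, |M i j|) (Set.finite_range _).bddAbove i)

lemma chebNorm_nonneg (M : Matrix (Fin m) (Fin n) ℝ) : 0 ≤ chebNorm M :=
  Real.iSup_nonneg fun _ => Real.iSup_nonneg fun _ => abs_nonneg _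

lemma chebNorm_le {M : Matrix (Fin m) (Fin n) ℝ} {c : ℝ} (h : ∀ i j, |M i j| ≤ c)
    (hc : 0 ≤ c) : chebNorm M ≤ c :=
  Real.iSup_le (fun i => Real.iSup_le (h i) hc) hc

end ChebNorm

section Determinants

variable {K : Type*} [Field K] [LinearOrder K] [IsStrictOrderedRing K]

lemma abs_mulVec_apply_le {m n : Type*} [Fintype n] (M : Matrix m n K) (v : n → K) (i : m)
    {c d : K} (hM : ∀ j, |M i j| ≤ c) (hv : ∀ j, |v j| ≤ d) :
    |(M *ᵥ v) i| ≤ Fintype.card n * (c * d) :=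
  calc |(M *ᵥ v) i| ≤ ∑ j, |M i j| * |v j| := by
        simpa only [mulVec, dotProduct, abs_mul] using
          Finset.abs_sum_le_sum_abs (fun j => M i j * v j) Finset.univ
    _ ≤ ∑ _j : n, c * d := Finset.sum_le_sum fun j _ =>
        mul_le_mul (hM j) (hv j) (abs_nonneg _) ((abs_nonneg _).trans (hM j))
    _ = Fintype.card n * (c * d) := by simp

lemma abs_adjugate_fin_succ_apply {k : ℕ} (B : Matrix (Fin (k + 1)) (Fin (k + 1)) K)
    (i j : Fin (k + 1)) : |B.adjugate i j| = |(B.submatrix j.succAbove i.succAbove).det| := by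
  simp [adjugate_fin_succ_eq_det_submatrix, abs_mul]

theorem abs_det_le_of_abs_sub_le_of_det_eq_zero {n : Type*} [Fintype n] [DecidableEq n]
    {B S : Matrix n n K} (hS : S.det = 0) {ε M : K} (hε : ∀ i j, |(B - S) i j| ≤ ε)
    (hadj : ∀ i j, |B.adjugate i j| ≤ M) :
    |B.det| ≤ Fintype.card n ^ 2 * ε * M := by
  obtain ⟨v, hv, hSv⟩ := exists_mulVec_eq_zero_iff.2 hS
  obtain ⟨k, hk⟩ := Function.ne_iff.1 hv
  have : Nonempty n := ⟨k⟩
  obtain ⟨l, hl⟩ := Finite.exists_max fun j => |v j|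
  have hvl : 0 < |v l| := (abs_pos.2 hk).trans_le (hl k)
  have hdet : B.det * v l = (B.adjugate *ᵥ ((B - S) *ᵥ v)) l := by
    rw [sub_mulVec, hSv, sub_zero, mulVec_mulVec, adjugate_mul, smul_mulVec, one_mulVec]
    rfl
  have hw : ∀ k, |((B - S) *ᵥ v) k| ≤ Fintype.card n * (ε * |v l|) :=
    fun k => abs_mulVec_apply_le _ _ k (hε k) hl
  refine le_of_mul_le_mul_right ?_ hvl
  calc |B.det| * |v l| = |(B.adjugate *ᵥ ((B - S) *ᵥ v)) l| := by rw [← abs_mul, hdet]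
    _ ≤ Fintype.card n * (M * (Fintype.card n * (ε * |v l|))) :=
        abs_mulVec_apply_le _ _ l (hadj l) hw
    _ = Fintype.card n ^ 2 * ε * M * |v l| := by ring

end Determinants

theorem det_submatrix_eq_zero_of_rank_lt {K m n o : Type*} [Field K] [Fintype n] [Fintype o]
    [DecidableEq o] (X : Matrix m n K) (ρ : o → m) (γ : o → n) (h : X.rank < Fintype.card o) :
    (X.submatrix ρ γ).det = 0 := by
  by_contra hdet
  have hunit : IsUnit (X.submatrix ρ γ) := (isUnit_iff_isUnit_det _).2 (Ne.isUnit hdet)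
  have := rank_submatrix_le X ρ γ
  rw [rank_of_isUnit _ hunit] at this
  omega

theorem det_submatrix_snoc_snoc {R : Type*} [CommRing R] {m n : Type*} {r : ℕ}
    (A : Matrix m n R) (I : Fin r → m) (J : Fin r → n) (hinv : IsUnit (A.submatrix I J).det)
    (i : m) (j : n) :
    (A.submatrix (Fin.snoc I i) (Fin.snoc J j)).det
      = (A.submatrix I J).det *
        (A - A.submatrix id J * (A.submatrix I J)⁻¹ * A.submatrix I id) i j := by
  have := (A.submatrix I J).invertibleOfIsUnitDet hinv
  have hblocks : A.submatrix (Fin.snoc I i) (Fin.snoc J j) =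
      (fromBlocks (A.submatrix I J) (A.submatrix I fun _ : Fin 1 => j)
        (A.submatrix (fun _ : Fin 1 => i) J) (A.submatrix (fun _ => i) fun _ => j)).submatrix
        finSumFinEquiv.symm finSumFinEquiv.symm := by
    ext p q
    refine Fin.lastCases ?_ (fun p => ?_) p <;> refine Fin.lastCases ?_ (fun q => ?_) q <;>
      simp
  rw [hblocks, det_submatrix_equiv_self, det_fromBlocks₁₁, invOf_eq_nonsing_inv, det_fin_one]
  rfl

/-- Goreinov–Tyrtyshnikov quasioptimality (Chebyshev norm): the maximum-volume
skeleton interpolation satisfies `‖A − Ã‖_C ≤ (r+1)² min_{rank X = r} ‖A − X‖_C`. -/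
theorem maxvol_quasioptimality_cheb {m n r : ℕ} (A X : Matrix (Fin m) (Fin n) ℝ)
    (E_C : ℝ) (hX : X.rank ≤ r) (hXE : chebNorm (A - X) ≤ E_C)
    (I : Fin r → Fin m) (J : Fin r → Fin n)
    (hmax : ∀ (I' : Fin r → Fin m) (J' : Fin r → Fin n),
      |(A.submatrix I' J').det| ≤ |(A.submatrix I J).det|)
    (hinv : IsUnit (A.submatrix I J).det) :
    chebNorm (A - A.submatrix id J * (A.submatrix I J)⁻¹ * A.submatrix I id)
      ≤ (r + 1) ^ 2 * E_C := by
  have hE : ∀ a b, |(A - X) a b| ≤ E_C := fun a b => (abs_apply_le_chebNorm _ a b).trans hXE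
  have hE0 : 0 ≤ E_C := (chebNorm_nonneg _).trans hXE
  refine chebNorm_le (fun i j => ?_) (by positivity)
  have hsing : (X.submatrix (Fin.snoc I i) (Fin.snoc J j)).det = 0 :=
    det_submatrix_eq_zero_of_rank_lt X _ _ (by simpa using Nat.lt_succ_of_le hX)
  have hbound := abs_det_le_of_abs_sub_le_of_det_eq_zero
    (B := A.submatrix (Fin.snoc I i) (Fin.snoc J j)) hsing (fun a b => hE _ _) fun a b => by
      rw [abs_adjugate_fin_succ_apply, submatrix_submatrix]
      exact hmax _ _
  rw [det_submatrix_snoc_snoc A I J hinv, abs_mul, mul_comm, Fintype.card_fin] at hbound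
  push_cast at hbound
  exact le_of_mul_le_mul_right hbound (abs_pos.2 hinv.ne_zero)
end

section
/- Let A be an m×n matrix and X a matrix with rank X ≤ r such that ‖A − X‖_2 ≤ E (spectral norm). If (I,J) is chosen so that A(I,J) is the maximum-volume r×r submatrix of A, then the skeleton interpolation satisfies ‖A − Ã‖_C ≤ (r+1) E. -/
/-- The spectral (ℓ²-operator) norm of a real matrix. -/
noncomputable def specNorm {m n : ℕ} (M : Matrix (Fin m) (Fin n) ℝ) : ℝ :=
  ‖LinearMap.toContinuousLinearMap (Matrix.toEuclideanLin M)‖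

open Matrix Finset in
/-- A nontrivial kernel vector of an `(r+1) × (r+1)` submatrix of a matrix of rank at most `r`. -/
lemma gt_exists_ker {m n r : ℕ} (X : Matrix (Fin m) (Fin n) ℝ) (hX : X.rank ≤ r)
    (ρ : Fin (r+1) → Fin m) (γ : Fin (r+1) → Fin n) :
    ∃ v : Fin (r+1) → ℝ, v ≠ 0 ∧ (X.submatrix ρ γ).mulVec v = 0 := by
  set M := X.submatrix ρ γ with hM
  have hfac : M = (1 : Matrix (Fin m) (Fin m) ℝ).submatrix ρ id *
      (X * (1 : Matrix (Fin n) (Fin n) ℝ).submatrix id γ) := by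
    ext i j
    have h1 : (X * (1 : Matrix (Fin n) (Fin n) ℝ).submatrix id γ) = X.submatrix id γ := by
      ext a b
      simp [Matrix.mul_apply, Matrix.one_apply, Matrix.submatrix_apply]
    rw [h1]
    simp [hM, Matrix.mul_apply, Matrix.one_apply, Matrix.submatrix_apply]
  have hrank : M.rank ≤ r := by
    calc M.rank ≤ (X * (1 : Matrix (Fin n) (Fin n) ℝ).submatrix id γ).rank := by
          rw [hfac]; exact Matrix.rank_mul_le_right _ _
      _ ≤ X.rank := Matrix.rank_mul_le_left _ _
      _ ≤ r := hX
  by_contra hcon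
  push_neg at hcon
  have hker : LinearMap.ker M.mulVecLin = ⊥ := by
    rw [LinearMap.ker_eq_bot']
    intro v hv
    by_contra hv0
    exact hcon v hv0 hv
  have := LinearMap.finrank_range_add_finrank_ker M.mulVecLin
  rw [hker, finrank_bot, add_zero, Module.finrank_fin_fun] at this
  rw [Matrix.rank] at hrank
  omega

open Matrix Finset in
lemma gt_mulVec_bound {m n : ℕ} (M : Matrix (Fin m) (Fin n) ℝ) (w : Fin n → ℝ) :
    ∑ i, (M.mulVec w i)^2 ≤ (specNorm M)^2 * ∑ x, (w x)^2 := by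
  set f := LinearMap.toContinuousLinearMap (Matrix.toEuclideanLin M)
  set w' : EuclideanSpace ℝ (Fin n) := (WithLp.equiv 2 _).symm w with hw'
  have happ : f w' = (WithLp.equiv 2 (Fin m → ℝ)).symm (M.mulVec w) := by
    show Matrix.toEuclideanLin M w' = _
    rw [Matrix.toEuclideanLin_apply]
    simp [hw']
  have hle : ‖f w'‖ ≤ specNorm M * ‖w'‖ := f.le_opNorm w'
  have h1 : ‖f w'‖^2 = ∑ i, (M.mulVec w i)^2 := by
    rw [happ, EuclideanSpace.norm_eq, Real.sq_sqrt (by positivity)]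
    simp [sq_abs]
  have h2 : ‖w'‖^2 = ∑ x, (w x)^2 := by
    rw [EuclideanSpace.norm_eq, Real.sq_sqrt (by positivity)]
    simp [hw', sq_abs]
  calc ∑ i, (M.mulVec w i)^2 = ‖f w'‖^2 := h1.symm
    _ ≤ (specNorm M * ‖w'‖)^2 := by
        apply pow_le_pow_left₀ (norm_nonneg _) hle
    _ = (specNorm M)^2 * ∑ x, (w x)^2 := by rw [mul_pow, h2]

open Matrix Finset in
lemma gt_submatrix_bound {m n k : ℕ} (M : Matrix (Fin m) (Fin n) ℝ)
    (ρ : Fin k → Fin m) (γ : Fin k → Fin n) (hρ : Function.Injective ρ)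
    (hγ : Function.Injective γ) (v : Fin k → ℝ) :
    ∑ p, ((M.submatrix ρ γ).mulVec v p)^2 ≤ (specNorm M)^2 * ∑ q, (v q)^2 := by
  classical
  set w : Fin n → ℝ := fun x => ∑ l, if γ l = x then v l else 0 with hw
  have hclaim1 : ∀ p, (M.submatrix ρ γ).mulVec v p = M.mulVec w (ρ p) := by
    intro p
    simp only [Matrix.mulVec, Matrix.submatrix_apply, dotProduct, hw]
    rw [show ∑ x, M (ρ p) x * ∑ l, (if γ l = x then v l else 0)
        = ∑ x, ∑ l, M (ρ p) x * (if γ l = x then v l else 0) by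
      exact Finset.sum_congr rfl fun x _ => Finset.mul_sum _ _ _,
      Finset.sum_comm]
    apply Finset.sum_congr rfl
    intro l _
    rw [Finset.sum_eq_single (γ l)] <;> simp +contextual [eq_comm]
  have hclaim2 : ∑ x, (w x)^2 = ∑ l, (v l)^2 := by
    have hval : ∀ l, w (γ l) = v l := by
      intro l
      simp only [hw]
      rw [Finset.sum_eq_single l]
      · simp
      · intro b _ hb
        rw [if_neg (fun h => hb (hγ h))]
      · simp
    have hzero : ∀ x, x ∉ Finset.univ.image γ → w x = 0 := by
      intro x hx
      simp only [Finset.mem_image, Finset.mem_univ, true_and, not_exists] at hx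
      simp only [hw]
      exact Finset.sum_eq_zero fun l _ => by simp [hx l]
    rw [← Finset.sum_subset (Finset.subset_univ (Finset.univ.image γ))
        (fun x _ hx => by rw [hzero x hx]; ring),
      Finset.sum_image (g := γ) (f := fun x => (w x)^2) (fun a _ b _ h => hγ h)]
    exact Finset.sum_congr rfl fun l _ => by rw [hval]
  calc ∑ p, ((M.submatrix ρ γ).mulVec v p)^2 = ∑ p, (M.mulVec w (ρ p))^2 := by
        exact Finset.sum_congr rfl fun p _ => by rw [hclaim1]
    _ ≤ ∑ i, (M.mulVec w i)^2 := by
        rw [show (∑ p : Fin k, (M.mulVec w (ρ p))^2)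
            = ∑ i ∈ Finset.univ.image ρ, (M.mulVec w i)^2 from
          (Finset.sum_image (g := ρ) (f := fun i => (M.mulVec w i)^2) (s := Finset.univ)
            (fun a _ b _ h => hρ h)).symm]
        exact Finset.sum_le_sum_of_subset_of_nonneg (Finset.subset_univ _)
          (fun i _ _ => sq_nonneg _)
    _ ≤ (specNorm M)^2 * ∑ x, (w x)^2 := gt_mulVec_bound M w
    _ = (specNorm M)^2 * ∑ q, (v q)^2 := by rw [hclaim2]

open Matrix Finset in
/-- The key determinant identity: the entry of the skeleton error times `det A(I,J)`
is the determinant of the bordered `(r+1) × (r+1)` submatrix. -/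
lemma gt_entry_det {m n r : ℕ} (A : Matrix (Fin m) (Fin n) ℝ)
    (I : Fin r → Fin m) (J : Fin r → Fin n)
    (hinv : IsUnit (A.submatrix I J).det) (i : Fin m) (j : Fin n) :
    (A - A.submatrix id J * (A.submatrix I J)⁻¹ * A.submatrix I id) i j
      * (A.submatrix I J).det
      = (A.submatrix (Fin.snoc I i) (Fin.snoc J j)).det := by
  classical
  set D := A.submatrix I J with hD
  haveI : Invertible D := D.invertibleOfIsUnitDet hinv
  set c : Matrix (Fin r) (Fin 1) ℝ := A.submatrix I (fun _ => j) with hc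
  set rT : Matrix (Fin 1) (Fin r) ℝ := A.submatrix (fun _ => i) J with hrT
  set a : Matrix (Fin 1) (Fin 1) ℝ := A.submatrix (fun _ => i) (fun _ => j) with ha
  have hsub : (A.submatrix (Fin.snoc I i) (Fin.snoc J j)).submatrix
      finSumFinEquiv finSumFinEquiv = Matrix.fromBlocks D c rT a := by
    have hca : ∀ p : Fin r, Fin.castAdd 1 p = Fin.castSucc p := fun p => rfl
    have hna : ∀ q : Fin 1, Fin.natAdd r q = Fin.last r := by
      intro q
      have := q.isLt
      ext
      simp only [Fin.natAdd, Fin.last]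
      omega
    ext p q
    rcases p with p | p <;> rcases q with q | q <;>
      simp [Matrix.fromBlocks, Matrix.submatrix_apply, hca, hna,
        Fin.snoc_castSucc, Fin.snoc_last, hD, hc, hrT, ha]
  have hdet1 : (A.submatrix (Fin.snoc I i) (Fin.snoc J j)).det
      = (Matrix.fromBlocks D c rT a).det := by
    rw [← hsub, Matrix.det_submatrix_equiv_self]
  rw [hdet1, Matrix.det_fromBlocks₁₁, Matrix.invOf_eq_nonsing_inv, Matrix.det_fin_one]
  have key : (A - A.submatrix id J * D⁻¹ * A.submatrix I id) i j
      = (a - rT * D⁻¹ * c) 0 0 := by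
    simp only [Matrix.sub_apply, Matrix.mul_apply, Matrix.submatrix_apply, ha, hc, hrT, id]
  rw [key, mul_comm]

open Matrix Finset in
/-- Every entry of the adjugate of a bordered submatrix is an `r × r` minor of `A`,
hence bounded by the maximal volume. -/
lemma gt_adjugate_bound {m n r : ℕ} (A : Matrix (Fin m) (Fin n) ℝ)
    (I : Fin r → Fin m) (J : Fin r → Fin n)
    (hmax : ∀ (I' : Fin r → Fin m) (J' : Fin r → Fin n),
      |(A.submatrix I' J').det| ≤ |(A.submatrix I J).det|)
    (ρ : Fin (r+1) → Fin m) (γ : Fin (r+1) → Fin n) (p q : Fin (r+1)) :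
    |(A.submatrix ρ γ).adjugate p q| ≤ |(A.submatrix I J).det| := by
  classical
  set B := A.submatrix ρ γ with hB
  rw [Matrix.adjugate_apply, Matrix.det_succ_row _ q]
  rw [Finset.sum_eq_single p]
  · rw [Matrix.updateRow_self, Pi.single_eq_same, mul_one,
      Matrix.submatrix_updateRow_succAbove]
    rw [abs_mul, abs_pow, abs_neg, abs_one, one_pow, one_mul]
    have : B.submatrix q.succAbove p.succAbove
        = A.submatrix (ρ ∘ q.succAbove) (γ ∘ p.succAbove) := by
      ext a b; simp [hB]
    rw [this]
    exact hmax _ _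
  · intro b _ hb
    rw [Matrix.updateRow_self, Pi.single_eq_of_ne hb, mul_zero, zero_mul]
  · simp

lemma gt_snoc_inj {α : Type*} {k : ℕ} {f : Fin k → α} {a : α}
    (hf : Function.Injective f) (ha : ∀ l, f l ≠ a) :
    Function.Injective (Fin.snoc f a) := by
  intro p q h
  induction p using Fin.lastCases with
  | last =>
    induction q using Fin.lastCases with
    | last => rfl
    | cast q => rw [Fin.snoc_last, Fin.snoc_castSucc] at h; exact absurd h.symm (ha q)
  | cast p =>
    induction q using Fin.lastCases with
    | last => rw [Fin.snoc_last, Fin.snoc_castSucc] at h; exact absurd h (ha p)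
    | cast q => rw [Fin.snoc_castSucc, Fin.snoc_castSucc] at h; exact congrArg _ (hf h)

/-- Goreinov–Tyrtyshnikov quasioptimality (spectral norm): the maximum-volume
skeleton interpolation satisfies `‖A − Ã‖_C ≤ (r+1) ‖A − X‖₂` for any `X` of
rank at most `r`. -/
theorem maxvol_quasioptimality_spectral {m n r : ℕ} (A X : Matrix (Fin m) (Fin n) ℝ)
    (E : ℝ) (hX : X.rank ≤ r) (hXE : specNorm (A - X) ≤ E)
    (I : Fin r → Fin m) (J : Fin r → Fin n)
    (hmax : ∀ (I' : Fin r → Fin m) (J' : Fin r → Fin n),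
      |(A.submatrix I' J').det| ≤ |(A.submatrix I J).det|)
    (hinv : IsUnit (A.submatrix I J).det) :
    chebNorm (A - A.submatrix id J * (A.submatrix I J)⁻¹ * A.submatrix I id)
      ≤ (r + 1) * E := by
  classical
  have hE0 : 0 ≤ E := le_trans (norm_nonneg _) hXE
  have hR10 : (0:ℝ) ≤ ((r:ℝ) + 1) * E := by positivity
  have hd : 0 < |(A.submatrix I J).det| := abs_pos.mpr hinv.ne_zero
  have hentry : ∀ (i : Fin m) (j : Fin n),
      |(A - A.submatrix id J * (A.submatrix I J)⁻¹ * A.submatrix I id) i j|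
        ≤ ((r:ℝ) + 1) * E := by
    intro i j
    have hid := gt_entry_det A I J hinv i j
    set ρ : Fin (r+1) → Fin m := Fin.snoc I i with hρdef
    set γ : Fin (r+1) → Fin n := Fin.snoc J j with hγdef
    set B := A.submatrix ρ γ with hBdef
    suffices hdb : |B.det| ≤ ((r:ℝ) + 1) * E * |(A.submatrix I J).det| by
      have h1 : |(A - A.submatrix id J * (A.submatrix I J)⁻¹ * A.submatrix I id) i j|
          * |(A.submatrix I J).det| ≤ (((r:ℝ) + 1) * E) * |(A.submatrix I J).det| := by
        rw [← abs_mul, hid]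
        exact hdb
      exact le_of_mul_le_mul_right h1 hd
    by_cases hi : ∃ k, I k = i
    · obtain ⟨k, hk⟩ := hi
      have hz : B.det = 0 := by
        apply Matrix.det_zero_of_row_eq (Fin.castSucc_lt_last k).ne
        funext q
        simp [hBdef, hρdef, Fin.snoc_castSucc, Fin.snoc_last, hk]
      rw [hz, abs_zero]
      positivity
    by_cases hj : ∃ k, J k = j
    · obtain ⟨k, hk⟩ := hj
      have hz : B.det = 0 := by
        apply Matrix.det_zero_of_column_eq (Fin.castSucc_lt_last k).ne
        intro p
        simp [hBdef, hγdef, Fin.snoc_castSucc, Fin.snoc_last, hk]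
      rw [hz, abs_zero]
      positivity
    push_neg at hi hj
    have hInjI : Function.Injective I := by
      intro k k' h
      by_contra hne
      exact hinv.ne_zero (Matrix.det_zero_of_row_eq hne
        (funext fun l => by simp [Matrix.submatrix_apply, h]))
    have hInjJ : Function.Injective J := by
      intro k k' h
      by_contra hne
      exact hinv.ne_zero (Matrix.det_zero_of_column_eq hne
        (fun l => by simp [Matrix.submatrix_apply, h]))
    have hρ : Function.Injective ρ := gt_snoc_inj hInjI hi
    have hγ : Function.Injective γ := gt_snoc_inj hInjJ hj
    obtain ⟨v, hv0, hvker⟩ := gt_exists_ker X hX ρ γ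
    set u := B.mulVec v with hu
    have huAX : u = ((A - X).submatrix ρ γ).mulVec v := by
      have : (A - X).submatrix ρ γ = B - X.submatrix ρ γ := by
        ext p q; simp [hBdef, Matrix.sub_apply]
      rw [this, Matrix.sub_mulVec, hvker, sub_zero, hu]
    have husq : ∑ q, (u q)^2 ≤ E^2 * ∑ q, (v q)^2 := by
      calc ∑ q, (u q)^2 ≤ (specNorm (A - X))^2 * ∑ q, (v q)^2 := by
            rw [huAX]; exact gt_submatrix_bound (A - X) ρ γ hρ hγ v
        _ ≤ E^2 * ∑ q, (v q)^2 := by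
            apply mul_le_mul_of_nonneg_right _ (Finset.sum_nonneg fun q _ => sq_nonneg _)
            exact pow_le_pow_left₀ (norm_nonneg _) hXE 2
    obtain ⟨p, -, hp⟩ := Finset.exists_max_image Finset.univ (fun q => |v q|)
      ⟨0, Finset.mem_univ 0⟩
    have hvp : 0 < |v p| := by
      obtain ⟨q, hq⟩ := Function.ne_iff.mp hv0
      exact lt_of_lt_of_le (abs_pos.mpr hq) (hp q (Finset.mem_univ q))
    have hsumv : ∑ q, (v q)^2 ≤ ((r:ℝ) + 1) * (v p)^2 := by
      calc ∑ q, (v q)^2 ≤ ∑ _q : Fin (r+1), (v p)^2 := by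
            apply Finset.sum_le_sum
            intro q _
            have h1 := hp q (Finset.mem_univ q)
            calc (v q)^2 = |v q|^2 := (sq_abs _).symm
              _ ≤ |v p|^2 := pow_le_pow_left₀ (abs_nonneg _) h1 2
              _ = (v p)^2 := sq_abs _
        _ = ((r:ℝ) + 1) * (v p)^2 := by
            rw [Finset.sum_const, Finset.card_univ, Fintype.card_fin]
            ring
    have hadjmul : B.det * v p = ∑ q, B.adjugate p q * u q := by
      have h1 : (B.adjugate * B).mulVec v = B.det • v := by
        rw [Matrix.adjugate_mul, Matrix.smul_mulVec, Matrix.one_mulVec]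
      have h2 := congrFun h1 p
      rw [← Matrix.mulVec_mulVec] at h2
      simpa [Matrix.mulVec, dotProduct, hu, Pi.smul_apply, smul_eq_mul] using h2.symm
    have hDB : |B.det| * |v p| ≤ |(A.submatrix I J).det| * ∑ q, |u q| := by
      rw [← abs_mul, hadjmul]
      calc |∑ q, B.adjugate p q * u q| ≤ ∑ q, |B.adjugate p q * u q| :=
            Finset.abs_sum_le_sum_abs _ _
        _ ≤ ∑ q, |(A.submatrix I J).det| * |u q| := by
            apply Finset.sum_le_sum
            intro q _
            rw [abs_mul]
            exact mul_le_mul_of_nonneg_right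
              (gt_adjugate_bound A I J hmax ρ γ p q) (abs_nonneg _)
        _ = |(A.submatrix I J).det| * ∑ q, |u q| := by rw [Finset.mul_sum]
    have hCS : (∑ q, |u q|)^2 ≤ ((r:ℝ) + 1) * ∑ q, (u q)^2 := by
      have h := Finset.sum_mul_sq_le_sq_mul_sq Finset.univ
        (fun _ : Fin (r+1) => (1:ℝ)) (fun q => |u q|)
      simpa [Finset.sum_const, Finset.card_univ, Fintype.card_fin, sq_abs,
        add_comm, Nat.cast_add] using h
    have hsum_u : ∑ q, |u q| ≤ ((r:ℝ) + 1) * E * |v p| := by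
      have h2 : (∑ q, |u q|)^2 ≤ (((r:ℝ) + 1) * E * |v p|)^2 := by
        calc (∑ q, |u q|)^2 ≤ ((r:ℝ) + 1) * ∑ q, (u q)^2 := hCS
          _ ≤ ((r:ℝ) + 1) * (E^2 * ∑ q, (v q)^2) := by
              apply mul_le_mul_of_nonneg_left husq (by positivity)
          _ ≤ ((r:ℝ) + 1) * (E^2 * (((r:ℝ) + 1) * (v p)^2)) := by
              apply mul_le_mul_of_nonneg_left _ (by positivity)
              exact mul_le_mul_of_nonneg_left hsumv (sq_nonneg E)
          _ = (((r:ℝ) + 1) * E * |v p|)^2 := by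
              rw [mul_pow, mul_pow, sq_abs]
              ring
      have ha : 0 ≤ ∑ q, |u q| := Finset.sum_nonneg fun q _ => abs_nonneg _
      have hb : 0 ≤ ((r:ℝ) + 1) * E * |v p| := by positivity
      nlinarith [h2, ha, hb]
    have hfinal : |B.det| * |v p| ≤ (((r:ℝ) + 1) * E * |(A.submatrix I J).det|) * |v p| := by
      calc |B.det| * |v p| ≤ |(A.submatrix I J).det| * ∑ q, |u q| := hDB
        _ ≤ |(A.submatrix I J).det| * (((r:ℝ) + 1) * E * |v p|) :=
            mul_le_mul_of_nonneg_left hsum_u (abs_nonneg _)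
        _ = (((r:ℝ) + 1) * E * |(A.submatrix I J).det|) * |v p| := by ring
    exact le_of_mul_le_mul_right hfinal hvp
  rw [chebNorm]
  exact Real.iSup_le (fun i => Real.iSup_le (fun j => hentry i j) hR10) hR10
end

section
/- Two-side nested interpolation property (Theorem 4) for d = 3: let A be an n_1×n_2×n_3 tensor, with interpolation sets I^{≤1} ⊆ indices i_1 (size r_1), I^{≤2} ⊆ pairs (i_1,i_2) (size r_2), I^{>2} ⊆ indices i_3 (size r_2), I^{>1} ⊆ pairs (i_2,i_3) (size r_1), satisfying the nestedness conditions: every (i_2,i_3) ∈ I^{>1} has i_3 ∈ I^{>2}, and every (i_1,i_2) ∈ I^{≤2} has i_1 ∈ I^{≤1}. Assume A_1 = A(I^{≤1}, I^{>1}) and A_2 = A(I^{≤2}, I^{>2}) are invertible. Then the interpolation Ã(i_1,i_2,i_3) = Σ A(i_1, I^{>1}) A_1^{-1} A(I^{≤1}, i_2, I^{>2}) A_2^{-1} A(I^{≤2}, i_3) satisfies Ã(i_1, i_2, i_3) = A(i_1, i_2, i_3) whenever (i_2,i_3) ∈ I^{>1}, or (i_1 ∈ I^{≤1} and i_3 ∈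 I^{>2}), or (i_1,i_2) ∈ I^{≤2}. -/
lemma aux_collapse_right {r : ℕ} (B : Matrix (Fin r) (Fin r) ℝ) (h : IsUnit B.det)
    (f : Fin r → ℝ) (s : Fin r) :
    ∑ x, f x * ∑ y, B⁻¹ x y * B y s = f s := by
  have hB : B⁻¹ * B = 1 := Matrix.nonsing_inv_mul B h
  have key : ∀ x, ∑ y, B⁻¹ x y * B y s = (1 : Matrix (Fin r) (Fin r) ℝ) x s := by
    intro x; rw [← hB, Matrix.mul_apply]
  simp [key, Matrix.one_apply]

lemma aux_collapse_left {r : ℕ} (B : Matrix (Fin r) (Fin r) ℝ) (h : IsUnit B.det)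
    (f : Fin r → ℝ) (s : Fin r) :
    ∑ x, B s x * ∑ y, B⁻¹ x y * f y = f s := by
  have hB : B * B⁻¹ = 1 := Matrix.mul_nonsing_inv B h
  have key : ∀ y, ∑ x, B s x * B⁻¹ x y = (1 : Matrix (Fin r) (Fin r) ℝ) s y := by
    intro y; rw [← hB, Matrix.mul_apply]
  calc ∑ x, B s x * ∑ y, B⁻¹ x y * f y
      = ∑ x, ∑ y, B s x * B⁻¹ x y * f y := by
        simp [Finset.mul_sum, mul_assoc]
    _ = ∑ y, ∑ x, B s x * B⁻¹ x y * f y := Finset.sum_comm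
    _ = ∑ y, (∑ x, B s x * B⁻¹ x y) * f y := by simp [Finset.sum_mul]
    _ = f s := by simp [key, Matrix.one_apply]

/-- Two-side nested interpolation property (Theorem 4) for `d = 3`: the tensor
cross interpolation is exact on every entry lying in one of the three blocks
determined by the nested interpolation sets. -/
theorem two_side_nested_interpolation_d3 {n1 n2 n3 r1 r2 : ℕ}
    (A : Fin n1 → Fin n2 → Fin n3 → ℝ)
    (I1 : Fin r1 → Fin n1) (I2 : Fin r2 → Fin n1 × Fin n2)
    (J1 : Fin r1 → Fin n2 × Fin n3) (J2 : Fin r2 → Fin n3)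
    (hnestR : ∀ t : Fin r1, ∃ u : Fin r2, (J1 t).2 = J2 u)
    (hnestL : ∀ s : Fin r2, ∃ u : Fin r1, (I2 s).1 = I1 u)
    (A1 : Matrix (Fin r1) (Fin r1) ℝ)
    (hA1 : A1 = fun s t => A (I1 s) (J1 t).1 (J1 t).2)
    (A2 : Matrix (Fin r2) (Fin r2) ℝ)
    (hA2 : A2 = fun s t => A (I2 s).1 (I2 s).2 (J2 t))
    (h1 : IsUnit A1.det) (h2 : IsUnit A2.det)
    (i1 : Fin n1) (i2 : Fin n2) (i3 : Fin n3)
    (hcross : (∃ t, J1 t = (i2, i3)) ∨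
              ((∃ s, I1 s = i1) ∧ (∃ u, J2 u = i3)) ∨
              (∃ s, I2 s = (i1, i2))) :
    (∑ t1, ∑ s1, ∑ t2, ∑ s2,
        A i1 (J1 t1).1 (J1 t1).2 * A1⁻¹ t1 s1 * A (I1 s1) i2 (J2 t2) *
          A2⁻¹ t2 s2 * A (I2 s2).1 (I2 s2).2 i3)
      = A i1 i2 i3 := by
  -- Normal form: pull sums inward
  have hflat :
      (∑ t1, ∑ s1, ∑ t2, ∑ s2,
        A i1 (J1 t1).1 (J1 t1).2 * A1⁻¹ t1 s1 * A (I1 s1) i2 (J2 t2) *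
          A2⁻¹ t2 s2 * A (I2 s2).1 (I2 s2).2 i3)
      = ∑ t1, A i1 (J1 t1).1 (J1 t1).2 *
          ∑ s1, A1⁻¹ t1 s1 *
            ∑ t2, A (I1 s1) i2 (J2 t2) *
              ∑ s2, A2⁻¹ t2 s2 * A (I2 s2).1 (I2 s2).2 i3 := by
    simp only [Finset.mul_sum, mul_assoc]
  rw [hflat]
  have e1 : ∀ s t, A (I1 s) (J1 t).1 (J1 t).2 = A1 s t := fun s t => by rw [hA1]
  have e2 : ∀ s t, A (I2 s).1 (I2 s).2 (J2 t) = A2 s t := fun s t => by rw [hA2]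
  rcases hcross with ⟨t, ht⟩ | ⟨⟨s, hs⟩, ⟨u, hu⟩⟩ | ⟨s, hs⟩
  · -- (i2, i3) ∈ J1
    obtain ⟨hi2, hi3⟩ : i2 = (J1 t).1 ∧ i3 = (J1 t).2 := by rw [ht]; exact ⟨rfl, rfl⟩
    subst hi2 hi3
    obtain ⟨u, hu⟩ := hnestR t
    rw [hu]
    simp only [e2]
    have inner : ∀ s1 : Fin r1, (∑ t2, A (I1 s1) (J1 t).1 (J2 t2) *
        ∑ s2, A2⁻¹ t2 s2 * A2 s2 u) = A (I1 s1) (J1 t).1 (J2 u) :=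
      fun s1 => aux_collapse_right A2 h2 _ u
    simp only [inner]
    simp only [← hu, e1]
    exact aux_collapse_right A1 h1 (fun t1 => A i1 (J1 t1).1 (J1 t1).2) t
  · -- i1 ∈ I1 and i3 ∈ J2
    subst hs hu
    simp only [e2]
    have inner : ∀ s1 : Fin r1, (∑ t2, A (I1 s1) i2 (J2 t2) *
        ∑ s2, A2⁻¹ t2 s2 * A2 s2 u) = A (I1 s1) i2 (J2 u) :=
      fun s1 => aux_collapse_right A2 h2 _ u
    simp only [inner, e1]
    exact aux_collapse_left A1 h1 (fun s1 => A (I1 s1) i2 (J2 u)) s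
  · -- (i1, i2) ∈ I2
    obtain ⟨hi1, hi2⟩ : i1 = (I2 s).1 ∧ i2 = (I2 s).2 := by rw [hs]; exact ⟨rfl, rfl⟩
    subst hi1 hi2
    obtain ⟨u, hu⟩ := hnestL s
    rw [hu]
    simp only [e1]
    rw [aux_collapse_left A1 h1 (fun s1 => ∑ t2, A (I1 s1) (I2 s).2 (J2 t2) *
      ∑ s2, A2⁻¹ t2 s2 * A (I2 s2).1 (I2 s2).2 i3) u]
    simp only [← hu, e2]
    exact aux_collapse_left A2 h2 (fun s2 => A (I2 s2).1 (I2 s2).2 i3) s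
end

section
/- Count of interpolation entries (Theorem 5, counting part): with two-side nested interpolation sets of sizes r_1,…,r_{d−1} (and r_0 = r_d = 1), the union over k = 1,…,d of the entry sets {(j_{≤k−1}, i_k, j_{>k}) : j_{≤k−1} ∈ I^{≤k−1}, i_k arbitrary, j_{>k} ∈ I^{>k}} has cardinality exactly Σ_{k=1}^{d} r_{k−1} n_k r_k − Σ_{k=1}^{d−1} r_k², because consecutive blocks intersect exactly in the sets I^{≤k} × I^{>k} of size r_k², and non-consecutive overlaps are contained in these. -/
/-! Add the blocks one mode at a time. By inclusion–exclusion, block `k + 1` enlarges the union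
by its size minus its overlap with the earlier blocks, and two-side nestedness makes this overlap
exactly `I^{≤k} × I^{>k}`: a suffix in `I^{>m}` with `m ≤ k` restricts to one in `I^{>k}`, and
conversely `I^{≤k} × I^{>k}` lies in both block `k` and block `k + 1`. -/

open Finset

variable (d : ℕ) (n : Fin d → ℕ)

/-- The `k`-th block of interpolated entries: full indices whose prefix before mode
`m` lies in the left set and whose suffix after mode `m` lies in the right set. -/
def interpBlock
    (L : (k : ℕ) → Finset ((j : {j : Fin d // j.val < k}) → Fin (n j.1)))
    (R : (k : ℕ) → Finset ((j : {j : Fin d // k ≤ j.val}) → Fin (n j.1)))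
    (m : Fin d) : Finset ((j : Fin d) → Fin (n j)) :=
  Finset.univ.filter fun i =>
    ((fun j : {j : Fin d // j.val < m.val} => i j.1) ∈ L m.val) ∧
    ((fun j : {j : Fin d // m.val + 1 ≤ j.val} => i j.1) ∈ R (m.val + 1))

theorem Finset.card_filter_restrict_mem_and_restrict_mem {ι : Type*} {β : ι → Type*}
    [Fintype ι] [DecidableEq ι] [∀ i, Fintype (β i)] [∀ i, DecidableEq (β i)]
    (p q : ι → Prop) [DecidablePred p] [DecidablePred q] (hq : ∀ i, q i ↔ ¬ p i)
    (A : Finset ((i : {i // p i}) → β i)) (B : Finset ((i : {i // q i}) → β i)) :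
    #{x : (i : ι) → β i |
        (fun i : {i // p i} => x i) ∈ A ∧ (fun i : {i // q i} => x i) ∈ B} = #A * #B := by
  rw [← card_product]
  refine card_nbij' (fun x => (fun i => x i, fun i => x i))
    (fun ab i => if h : p i then ab.1 ⟨i, h⟩ else ab.2 ⟨i, (hq i).2 h⟩) ?_ ?_ ?_ ?_
  · intro x hx
    simpa using hx
  · rintro ⟨a, b⟩ hab
    have ha : (fun i : {i // p i} => if h : p i then a ⟨i, h⟩ else b ⟨i, (hq i).2 h⟩) = a :=
      funext fun i => dif_pos i.2
    have hb : (fun i : {i // q i} => if h : p i then a ⟨i, h⟩ else b ⟨i, (hq i).2 h⟩) = b :=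
      funext fun i => dif_neg ((hq i).1 i.2)
    simp only [coe_product, Set.mem_prod, mem_coe] at hab
    simpa [ha, hb] using hab
  · intro x _
    funext i
    by_cases h : p i <;> simp [h]
  · rintro ⟨a, b⟩ _
    ext i
    · exact dif_pos i.2
    · exact dif_neg ((hq i).1 i.2)

theorem Finset.card_biUnion_add_sum_card_inter_biUnion_lt {ι α : Type*} [LinearOrder ι]
    [DecidableEq ι] [DecidableEq α] (B : ι → Finset α) (s : Finset ι) :
    #(s.biUnion B) + ∑ m ∈ s, #(B m ∩ {x ∈ s | x < m}.biUnion B) = ∑ m ∈ s, #(B m) := by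
  induction s using Finset.induction_on_max with
  | empty => simp
  | insert a s hlt ih =>
    have ha : a ∉ s := fun h => lt_irrefl a (hlt a h)
    have hbefore_a : {x ∈ insert a s | x < a} = s := by
      ext x
      simp only [mem_filter, mem_insert]
      exact ⟨fun ⟨h, hx⟩ => h.resolve_left (ne_of_lt hx), fun h => ⟨Or.inr h, hlt x h⟩⟩
    have hbefore : ∀ m ∈ s, {x ∈ insert a s | x < m} = {x ∈ s | x < m} := fun m hm => by
      rw [filter_insert, if_neg (lt_asymm (hlt m hm))]
    rw [biUnion_insert, sum_insert ha, sum_insert ha, hbefore_a, sum_congr rfl fun m hm => by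
      rw [hbefore m hm]]
    have := card_union_add_card_inter (B a) (s.biUnion B)
    omega

/-- The entries `I^{≤t} × I^{>t}`. -/
def interpJunction
    (L : (k : ℕ) → Finset ((j : {j : Fin d // j.val < k}) → Fin (n j.1)))
    (R : (k : ℕ) → Finset ((j : {j : Fin d // k ≤ j.val}) → Fin (n j.1)))
    (t : ℕ) : Finset ((j : Fin d) → Fin (n j)) :=
  {i | (fun j : {j : Fin d // j.val < t} => i j.1) ∈ L t ∧
    (fun j : {j : Fin d // t ≤ j.val} => i j.1) ∈ R t}

section

variable {d n}
variable {L : (k : ℕ) → Finset ((j : {j : Fin d // j.val < k}) → Fin (n j.1))}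
  {R : (k : ℕ) → Finset ((j : {j : Fin d // k ≤ j.val}) → Fin (n j.1))}

theorem card_interpJunction (t : ℕ) : #(interpJunction d n L R t) = #(L t) * #(R t) :=
  card_filter_restrict_mem_and_restrict_mem (β := fun j => Fin (n j))
    (fun j : Fin d => j.val < t) (fun j => t ≤ j.val) (fun _ => Nat.not_lt.symm) (L t) (R t)

theorem restrict_mem_of_le
    (hnestR : ∀ k, ∀ q ∈ R k,
      (fun j : {j : Fin d // k + 1 ≤ j.val} => q ⟨j.1, Nat.le_of_succ_le j.2⟩) ∈ R (k + 1))
    (i : (j : Fin d) → Fin (n j)) {a b : ℕ} (hab : a ≤ b)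
    (hi : (fun j : {j : Fin d // a ≤ j.val} => i j.1) ∈ R a) :
    (fun j : {j : Fin d // b ≤ j.val} => i j.1) ∈ R b := by
  induction b, hab using Nat.le_induction with
  | base => exact hi
  | succ b _ ih => exact hnestR b _ ih

theorem interpBlock_inter_biUnion_lt
    (hnestL : ∀ k, ∀ p ∈ L (k + 1),
      (fun j : {j : Fin d // j.val < k} => p ⟨j.1, Nat.lt_succ_of_lt j.2⟩) ∈ L k)
    (hnestR : ∀ k, ∀ q ∈ R k,
      (fun j : {j : Fin d // k + 1 ≤ j.val} => q ⟨j.1, Nat.le_of_succ_le j.2⟩) ∈ R (k + 1))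
    (s : ℕ) (hs : s + 1 < d) :
    interpBlock d n L R ⟨s + 1, hs⟩ ∩
        (univ.filter (· < ⟨s + 1, hs⟩)).biUnion (interpBlock d n L R)
      = interpJunction d n L R (s + 1) := by
  ext i
  simp only [interpBlock, interpJunction, mem_inter, mem_biUnion, mem_filter, mem_univ,
    true_and]
  constructor
  · rintro ⟨⟨hL, _⟩, m, hm, _, hR⟩
    exact ⟨hL, restrict_mem_of_le hnestR i (Fin.lt_def.1 hm) hR⟩
  · rintro ⟨hL, hR⟩
    exact ⟨⟨hL, hnestR _ _ hR⟩, ⟨s, by omega⟩, Fin.lt_def.2 (Nat.lt_succ_self s),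
      hnestL s _ hL, hR⟩

end

theorem nested_interpolation_entry_count (r : ℕ → ℕ)
    (L : (k : ℕ) → Finset ((j : {j : Fin d // j.val < k}) → Fin (n j.1)))
    (R : (k : ℕ) → Finset ((j : {j : Fin d // k ≤ j.val}) → Fin (n j.1)))
    (hL : ∀ k ≤ d, (L k).card = r k) (hR : ∀ k ≤ d, (R k).card = r k)
    (hnestL : ∀ k, ∀ p ∈ L (k + 1),
      (fun j : {j : Fin d // j.val < k} => p ⟨j.1, Nat.lt_succ_of_lt j.2⟩) ∈ L k)
    (hnestR : ∀ k, ∀ q ∈ R k,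
      (fun j : {j : Fin d // k + 1 ≤ j.val} => q ⟨j.1, Nat.le_of_succ_le j.2⟩) ∈ R (k + 1))
    (hblock : ∀ m : Fin d,
      (interpBlock d n L R m).card = r m.val * n m * r (m.val + 1)) :
    (Finset.univ.biUnion (interpBlock d n L R)).card
      = ∑ m : Fin d, r m.val * n m * r (m.val + 1)
        - ∑ k ∈ Finset.Icc 1 (d - 1), r k ^ 2 := by
  have hoverlap : ∀ m : Fin d,
      #(interpBlock d n L R m ∩ (univ.filter (· < m)).biUnion (interpBlock d n L R))
        = if 0 < m.val then r m ^ 2 else 0 := by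
    rintro ⟨_ | s, hs⟩
    · simp [Fin.lt_def]
    · rw [interpBlock_inter_biUnion_lt hnestL hnestR s hs, card_interpJunction,
        hL _ hs.le, hR _ hs.le, if_pos s.succ_pos, sq]
  have hoverlaps : ∑ m : Fin d,
      #(interpBlock d n L R m ∩ (univ.filter (· < m)).biUnion (interpBlock d n L R))
        = ∑ k ∈ Icc 1 (d - 1), r k ^ 2 := by
    rw [sum_congr rfl fun m _ => hoverlap m,
      Fin.sum_univ_eq_sum_range (fun k => if 0 < k then r k ^ 2 else 0), ← sum_filter]
    congr 1
    ext k
    simp only [mem_filter, mem_range, mem_Icc]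
    omega
  have := card_biUnion_add_sum_card_inter_biUnion_lt (interpBlock d n L R) univ
  rw [hoverlaps, sum_congr rfl fun m _ => hblock m] at this
  omega
end
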